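/- Excursion hitting-time bound: with A ⊔ B ⊔ C partitioning the state space, for a ∈ A: E^a(T_{B∪C}) ≤ E^a(T_C) ≤ E^a(T_{B∪C}) + ψ_a·(f_B + σ·f_A)/(1 − ψσ), where f_A = sup_{a∈A} E^a(T_{B∪C}), f_B = sup_{b∈B} E^b(T_{A∪C}), ψ = sup_{a∈A} P^a(T_B < T_C), σ = sup_{b∈B} P^b(T_A < T_C), assuming ψσ < 1. -/

import Mathlib

open MeasureTheory ProbabilityTheory
open scoped ENNReal

noncomputable section

/-- First hitting time of a set `A` by a path `p`, valued in `ℝ≥0∞` (`⊤` if never hit). -/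
def hitTime {V : Type*} (p : ℕ → V) (A : Set V) : ℝ≥0∞ :=
  ⨅ t ∈ {t : ℕ | p t ∈ A}, (t : ℝ≥0∞)

/-- Position at time `t` of the random walk started at `x` with steps `X j`. -/
def walk {Ω : Type*} (X : ℕ → Ω → ℤ × ℤ) (x : ℤ × ℤ) (t : ℕ) (ω : Ω) : ℤ × ℤ :=
  x + ∑ j ∈ Finset.range t, X j ω

/-- Expected hitting time of `D` starting from `x`: `E^x(T_D)`. -/
def expHit {Ω : Type*} [MeasurableSpace Ω] (P : Measure Ω) (X : ℕ → Ω → ℤ × ℤ)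
    (D : Set (ℤ × ℤ)) (x : ℤ × ℤ) : ℝ≥0∞ :=
  ∫⁻ ω, hitTime (fun t => walk X x t ω) D ∂P

/-- `ψ_x(D,C) = P^x(T_D < T_C)`. -/
def excPsi {Ω : Type*} [MeasurableSpace Ω] (P : Measure Ω) (X : ℕ → Ω → ℤ × ℤ)
    (D C : Set (ℤ × ℤ)) (x : ℤ × ℤ) : ℝ≥0∞ :=
  P {ω | hitTime (fun t => walk X x t ω) D < hitTime (fun t => walk X x t ω) C}

/-!
Truncate time at `n`: `G_n(x) = E^x min(T_C, n)` is finite. Since `T_C ≤ t + T_C ∘ θ_t` for every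
`t`, taking `t = T_{B ∪ C}` and applying the Markov property at that time (split over the countably
many values of `(T_{B ∪ C}, X_{T_{B ∪ C}})`) gives
`G_n(x) ≤ E^x T_{B ∪ C} + P^x(T_B < T_C) · sup_B G_n`, an entrance into `B ∪ C` through `C`
contributing nothing. The same bound with `A` and `B` exchanged yields
`sup_B G_n ≤ f_B + σ (f_A + ψ sup_B G_n)`, which is solved for the finite `sup_B G_n`;
monotone convergence in `n` then gives the claim.
-/

lemma ENNReal.le_div_one_sub_of_le_add_mul {g K r : ℝ≥0∞} (hg : g ≠ ⊤) (hr : r < 1)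
    (h : g ≤ K + r * g) : g ≤ K / (1 - r) := by
  rw [ENNReal.le_div_iff_mul_le (Or.inl (tsub_pos_of_lt hr).ne')
    (Or.inl (ENNReal.sub_ne_top ENNReal.one_ne_top)), ENNReal.mul_sub fun _ _ => hg, mul_one,
    tsub_le_iff_right, mul_comm]
  exact h

section HitTime

variable {V : Type*} {p : ℕ → V} {D D' : Set V} {t : ℕ}

lemma hitTime_le_of_mem (h : p t ∈ D) : hitTime p D ≤ t :=
  iInf₂_le t h

lemma hitTime_eq_top (h : ∀ t, p t ∉ D) : hitTime p D = ⊤ := by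
  simp [hitTime, h]

lemma hitTime_eq_find [DecidablePred fun t => p t ∈ D] (h : ∃ t, p t ∈ D) :
    hitTime p D = Nat.find h :=
  le_antisymm (hitTime_le_of_mem (Nat.find_spec h))
    (le_iInf₂ fun _ ht => Nat.cast_le.mpr (Nat.find_min' h ht))

lemma hitTime_eq_natCast_iff : hitTime p D = t ↔ p t ∈ D ∧ ∀ s < t, p s ∉ D := by
  classical
  constructor
  · intro h
    have hex : ∃ t, p t ∈ D := by
      by_contra hne
      simp [hitTime_eq_top (not_exists.mp hne)] at h
    rw [hitTime_eq_find hex, Nat.cast_inj] at h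
    exact ⟨h ▸ Nat.find_spec hex, fun s hs => Nat.find_min hex (h ▸ hs)⟩
  · rintro ⟨ht, hbefore⟩
    refine le_antisymm (hitTime_le_of_mem ht) (le_iInf₂ fun s hs => ?_)
    exact Nat.cast_le.mpr (not_lt.mp fun hst => hbefore s hst hs)

lemma natCast_lt_hitTime (h : ∀ s ≤ t, p s ∉ D) : (t : ℝ≥0∞) < hitTime p D :=
  lt_of_lt_of_le (Nat.cast_lt.mpr t.lt_succ_self) <| le_iInf₂ fun s hs =>
    Nat.cast_le.mpr (Nat.succ_le_of_lt (not_le.mp fun hst => h s hst hs))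

lemma hitTime_eq_zero (h : p 0 ∈ D) : hitTime p D = 0 :=
  nonpos_iff_eq_zero.mp (by simpa using hitTime_le_of_mem h)

lemma hitTime_anti (h : D ⊆ D') : hitTime p D' ≤ hitTime p D :=
  le_iInf₂ fun _ ht => hitTime_le_of_mem (h ht)

lemma hitTime_le_add_hitTime_shift (t : ℕ) :
    hitTime p D ≤ t + hitTime (fun s => p (t + s)) D := by
  classical
  by_cases h : ∃ s, p (t + s) ∈ D
  · rw [hitTime_eq_find h, ← Nat.cast_add]
    exact hitTime_le_of_mem (Nat.find_spec h)
  · rw [hitTime_eq_top (not_exists.mp h), add_top]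
    exact le_top

lemma hitTime_eq_top_or_eq_natCast (p : ℕ → V) (D : Set V) :
    hitTime p D = ⊤ ∨ ∃ t : ℕ, hitTime p D = t := by
  classical
  by_cases h : ∃ t, p t ∈ D
  · exact Or.inr ⟨_, hitTime_eq_find h⟩
  · exact Or.inl (hitTime_eq_top (not_exists.mp h))

lemma measurable_hitTime {Ω : Type*} [MeasurableSpace Ω] {p : Ω → ℕ → V}
    (hp : ∀ t, MeasurableSet {ω | p ω t ∈ D}) : Measurable fun ω => hitTime (p ω) D := by
  classical
  refine Measurable.iInf fun t => ?_
  simp only [iInf_eq_if]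
  exact Measurable.ite (hp t) measurable_const measurable_const

end HitTime

section Walk

variable {Ω : Type*} {X : ℕ → Ω → ℤ × ℤ} {x : ℤ × ℤ} {ω : Ω}

@[simp]
lemma walk_zero : walk X x 0 ω = x := by
  simp [walk]

lemma walk_add (t s : ℕ) : walk X x (t + s) ω = walk (fun j => X (t + j)) (walk X x t ω) s ω := by
  simp [walk, Finset.sum_range_add, add_assoc]

lemma measurable_walk {m : MeasurableSpace Ω} {t : ℕ} (hX : ∀ j < t, Measurable (X j)) :
    Measurable (walk X x t) := by
  unfold walk
  exact (Finset.measurable_sum _ fun j hj => hX j (Finset.mem_range.mp hj)).const_add x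

lemma measurable_hitTime_walk [MeasurableSpace Ω] (hX : ∀ j, Measurable (X j)) (x : ℤ × ℤ)
    (D : Set (ℤ × ℤ)) : Measurable fun ω => hitTime (fun s => walk X x s ω) D :=
  measurable_hitTime fun _ => measurable_walk (fun j _ => hX j) D.to_countable.measurableSet

end Walk

section Markov

variable {Ω β : Type*} [MeasurableSpace Ω] [MeasurableSpace β] {P : Measure Ω}
  {X : ℕ → Ω → β}

abbrev sigmaOfSteps (X : ℕ → Ω → β) (S : Set ℕ) : MeasurableSpace Ω :=
  ⨆ i ∈ S, MeasurableSpace.comap (X i) inferInstance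

omit [MeasurableSpace Ω] in
lemma measurable_sigmaOfSteps {S : Set ℕ} {i : ℕ} (hi : i ∈ S) :
    Measurable[sigmaOfSteps X S] (X i) :=
  Measurable.of_comap_le (le_iSup₂ (f := fun i (_ : i ∈ S) =>
    MeasurableSpace.comap (X i) inferInstance) i hi)

lemma sigmaOfSteps_le (hX : ∀ j, Measurable (X j)) (S : Set ℕ) :
    sigmaOfSteps X S ≤ ‹MeasurableSpace Ω› :=
  iSup₂_le fun i _ => (hX i).comap_le

lemma map_shift_eq_map [IsProbabilityMeasure P] {μ : Measure β}
    (hX : ∀ j, Measurable (X j)) (hind : iIndepFun X P) (hlaw : ∀ j, P.map (X j) = μ) (t : ℕ) :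
    P.map (fun ω j => X (t + j) ω) = P.map (fun ω j => X j ω) := by
  have hshift : iIndepFun (fun j => X (t + j)) P := hind.precomp (add_right_injective t)
  rw [hshift.map_fun_eq_infinitePi_map fun j => hX (t + j), hind.map_fun_eq_infinitePi_map hX]
  congr 1
  funext j
  rw [hlaw, hlaw]

theorem setLIntegral_comp_shift [IsProbabilityMeasure P] {μ : Measure β}
    (hX : ∀ j, Measurable (X j)) (hind : iIndepFun X P) (hlaw : ∀ j, P.map (X j) = μ)
    {t : ℕ} {E : Set Ω} (hE : MeasurableSet[sigmaOfSteps X (Set.Iio t)] E)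
    {g : (ℕ → β) → ℝ≥0∞} (hg : Measurable g) :
    ∫⁻ ω in E, g (fun j => X (t + j) ω) ∂P = P E * ∫⁻ ω, g (fun j => X j ω) ∂P := by
  have hindep : Indep (sigmaOfSteps X (Set.Iio t)) (sigmaOfSteps X (Set.Ici t)) P :=
    indep_iSup_of_disjoint (fun i => (hX i).comap_le) hind (Set.Iio_disjoint_Ici le_rfl)
  have hfuture : Measurable[sigmaOfSteps X (Set.Ici t)] fun ω j => X (t + j) ω :=
    @measurable_pi_lambda _ _ _ (sigmaOfSteps X (Set.Ici t)) _ _ fun j =>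
      measurable_sigmaOfSteps (Nat.le_add_right t j)
  have hshift : Measurable fun ω j => X (t + j) ω := measurable_pi_lambda _ fun j => hX (t + j)
  have hEm : MeasurableSet E := sigmaOfSteps_le hX _ _ hE
  calc ∫⁻ ω in E, g (fun j => X (t + j) ω) ∂P
      = ∫⁻ ω, E.indicator 1 ω * g (fun j => X (t + j) ω) ∂P := by
        rw [← lintegral_indicator hEm]
        congr 1
        funext ω
        by_cases h : ω ∈ E <;> simp [h]
    _ = P E * ∫⁻ ω, g (fun j => X (t + j) ω) ∂P := by
        rw [lintegral_mul_eq_lintegral_mul_lintegral_of_independent_measurableSpace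
          (f := E.indicator 1) (g := fun ω => g (fun j => X (t + j) ω))
          (sigmaOfSteps_le hX _) (sigmaOfSteps_le hX _) hindep
          ((measurable_indicator_const_iff 1).2 hE) (hg.comp hfuture), lintegral_indicator_one hEm]
    _ = P E * ∫⁻ ω, g (fun j => X j ω) ∂P := by
        rw [← lintegral_map hg hshift, map_shift_eq_map hX hind hlaw,
          lintegral_map hg (measurable_pi_lambda _ hX)]

end Markov

def truncExpHit {Ω : Type*} [MeasurableSpace Ω] (P : Measure Ω) (X : ℕ → Ω → ℤ × ℤ)
    (C : Set (ℤ × ℤ)) (n : ℕ) (x : ℤ × ℤ) : ℝ≥0∞ :=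
  ∫⁻ ω, min (hitTime (fun t => walk X x t ω) C) n ∂P

def firstEntrance {Ω : Type*} (X : ℕ → Ω → ℤ × ℤ) (D : Set (ℤ × ℤ)) (x : ℤ × ℤ) (t : ℕ)
    (y : ℤ × ℤ) : Set Ω :=
  {ω | hitTime (fun s => walk X x s ω) D = t ∧ walk X x t ω = y}

section StrongMarkov

variable {Ω : Type*} [MeasurableSpace Ω] {P : Measure Ω} {X : ℕ → Ω → ℤ × ℤ}
  {C D : Set (ℤ × ℤ)} {x : ℤ × ℤ}

omit [MeasurableSpace Ω] in
lemma measurableSet_firstEntrance (t : ℕ) (y : ℤ × ℤ) :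
    MeasurableSet[sigmaOfSteps X (Set.Iio t)] (firstEntrance X D x t y) := by
  have hwalk : ∀ s ≤ t, Measurable[sigmaOfSteps X (Set.Iio t)] (walk X x s) := fun s hs =>
    measurable_walk fun j hj => measurable_sigmaOfSteps (lt_of_lt_of_le hj hs)
  have hD : ∀ s ≤ t, MeasurableSet[sigmaOfSteps X (Set.Iio t)] {ω | walk X x s ω ∈ D} :=
    fun s hs => hwalk s hs D.to_countable.measurableSet
  simp only [firstEntrance, hitTime_eq_natCast_iff, Set.ofPred_and, Set.ofPred_forall]
  refine ((hD t le_rfl).inter (MeasurableSet.iInter fun s => MeasurableSet.iInter fun hs =>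
    (hD s hs.le).compl)).inter (hwalk t le_rfl (measurableSet_singleton y))

omit [MeasurableSpace Ω] in
lemma pairwise_disjoint_firstEntrance :
    Pairwise (Function.onFun Disjoint fun q : ℕ × (ℤ × ℤ) => firstEntrance X D x q.1 q.2) := by
  rintro ⟨t, y⟩ ⟨t', y'⟩ hne
  refine Set.disjoint_left.mpr fun ω ⟨hτ, hy⟩ ⟨hτ', hy'⟩ => hne ?_
  obtain rfl : t = t' := Nat.cast_injective (hτ.symm.trans hτ')
  exact congrArg _ (hy.symm.trans hy')

lemma measurable_truncHitTime (C : Set (ℤ × ℤ)) (n : ℕ) (y : ℤ × ℤ) :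
    Measurable fun ξ : ℕ → ℤ × ℤ => min (hitTime (fun s => walk (fun j ξ => ξ j) y s ξ) C) n :=
  (measurable_hitTime fun _ => measurable_walk (fun j _ => measurable_pi_apply j)
    C.to_countable.measurableSet).min measurable_const

omit [MeasurableSpace Ω] in
lemma hitTime_walk_le_add_hitTime_shift (t : ℕ) (ω : Ω) :
    hitTime (fun s => walk X x s ω) C
      ≤ t + hitTime (fun s => walk (fun j => X (t + j)) (walk X x t ω) s ω) C :=
  (hitTime_le_add_hitTime_shift t).trans_eq (by simp only [walk_add])

theorem truncExpHit_le_expHit_add_tsum [IsProbabilityMeasure P] {μ : Measure (ℤ × ℤ)}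
    (hX : ∀ j, Measurable (X j)) (hind : iIndepFun X P) (hlaw : ∀ j, P.map (X j) = μ)
    (C D : Set (ℤ × ℤ)) (x : ℤ × ℤ) (n : ℕ) :
    truncExpHit P X C n x ≤ expHit P X D x +
      ∑' q : ℕ × (ℤ × ℤ), P (firstEntrance X D x q.1 q.2) * truncExpHit P X C n q.2 := by
  -- `F y` is the truncated hitting time of `C` as a function of the step sequence `ξ`.
  set F : ℤ × ℤ → (ℕ → ℤ × ℤ) → ℝ≥0∞ := fun y ξ =>
    min (hitTime (fun s => walk (fun j ξ => ξ j) y s ξ) C) n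
  set R : Ω → ℝ≥0∞ := fun ω => ∑' q : ℕ × (ℤ × ℤ),
    (firstEntrance X D x q.1 q.2).indicator (fun ω => F q.2 fun j => X (q.1 + j) ω) ω
  have hE : ∀ q : ℕ × (ℤ × ℤ), MeasurableSet (firstEntrance X D x q.1 q.2) := fun q =>
    sigmaOfSteps_le hX _ _ (measurableSet_firstEntrance q.1 q.2)
  have hτ : Measurable fun ω => hitTime (fun s => walk X x s ω) D :=
    measurable_hitTime_walk hX x D
  have hpoint : ∀ ω, min (hitTime (fun s => walk X x s ω) C) n
      ≤ hitTime (fun s => walk X x s ω) D + R ω := by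
    intro ω
    rcases hitTime_eq_top_or_eq_natCast (fun s => walk X x s ω) D with h | ⟨t, ht⟩
    · simp [h]
    have hmem : ω ∈ firstEntrance X D x t (walk X x t ω) := ⟨ht, rfl⟩
    calc min (hitTime (fun s => walk X x s ω) C) n
        ≤ min (t + hitTime (fun s => walk (fun j => X (t + j)) (walk X x t ω) s ω) C) (t + n) :=
          min_le_min (hitTime_walk_le_add_hitTime_shift t ω) le_add_self
      _ = t + F (walk X x t ω) fun j => X (t + j) ω := min_add_add_left _ _ _
      _ ≤ hitTime (fun s => walk X x s ω) D + R ω := by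
          rw [ht, ← Set.indicator_of_mem hmem fun ω => F (walk X x t ω) fun j => X (t + j) ω]
          gcongr
          exact ENNReal.le_tsum (t, walk X x t ω)
  calc truncExpHit P X C n x
      ≤ ∫⁻ ω, hitTime (fun s => walk X x s ω) D + R ω ∂P := lintegral_mono hpoint
    _ = expHit P X D x + ∑' q : ℕ × (ℤ × ℤ), ∫⁻ ω in firstEntrance X D x q.1 q.2,
          F q.2 (fun j => X (q.1 + j) ω) ∂P := by
        rw [lintegral_add_left hτ, lintegral_tsum fun q => ?_]
        · simp_rw [lintegral_indicator (hE _)]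
          rfl
        · exact ((measurable_truncHitTime C n q.2).comp
            (measurable_pi_lambda _ fun j => hX (q.1 + j))).indicator (hE q) |>.aemeasurable
    _ = _ := by
        congr 1
        refine tsum_congr fun q => ?_
        exact setLIntegral_comp_shift hX hind hlaw (measurableSet_firstEntrance q.1 q.2)
          (measurable_truncHitTime C n q.2)

omit [MeasurableSpace Ω] in
lemma firstEntrance_eq_empty {t : ℕ} {y : ℤ × ℤ} (hy : y ∉ D) : firstEntrance X D x t y = ∅ :=
  Set.eq_empty_of_forall_notMem fun _ ⟨hτ, hyt⟩ => hy (hyt ▸ (hitTime_eq_natCast_iff.mp hτ).1)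

omit [MeasurableSpace Ω] in
lemma firstEntrance_subset_excursion {B : Set (ℤ × ℤ)} (hBC : Disjoint B C) {t : ℕ}
    {y : ℤ × ℤ} (hy : y ∈ B) :
    firstEntrance X (B ∪ C) x t y ⊆
      {ω | hitTime (fun s => walk X x s ω) B < hitTime (fun s => walk X x s ω) C} := by
  rintro ω ⟨hτ, rfl⟩
  refine (hitTime_le_of_mem hy).trans_lt (natCast_lt_hitTime fun s hs hsC => ?_)
  rcases hs.lt_or_eq with hst | rfl
  · exact (hitTime_eq_natCast_iff.mp hτ).2 s hst (Or.inr hsC)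
  · exact Set.disjoint_left.mp hBC hy hsC

lemma truncExpHit_eq_zero {n : ℕ} {y : ℤ × ℤ} (hy : y ∈ C) : truncExpHit P X C n y = 0 := by
  simp [truncExpHit, hitTime_eq_zero (p := fun s => walk X y s _) (by simpa using hy)]

lemma tsum_firstEntrance_mul_truncExpHit_le {B : Set (ℤ × ℤ)} (hX : ∀ j, Measurable (X j))
    (hBC : Disjoint B C) (n : ℕ) {H : ℝ≥0∞} (hH : ∀ b ∈ B, truncExpHit P X C n b ≤ H) :
    ∑' q : ℕ × (ℤ × ℤ), P (firstEntrance X (B ∪ C) x q.1 q.2) * truncExpHit P X C n q.2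
      ≤ excPsi P X B C x * H := by
  set exc := {ω | hitTime (fun s => walk X x s ω) B < hitTime (fun s => walk X x s ω) C}
  have hterm : ∀ q : ℕ × (ℤ × ℤ), P (firstEntrance X (B ∪ C) x q.1 q.2) * truncExpHit P X C n q.2
      ≤ P (firstEntrance X (B ∪ C) x q.1 q.2 ∩ exc) * H := by
    rintro ⟨t, y⟩
    by_cases hyB : y ∈ B
    · rw [Set.inter_eq_left.mpr (firstEntrance_subset_excursion hBC hyB)]
      exact mul_le_mul_right (hH y hyB) _
    by_cases hyC : y ∈ C
    · simp [truncExpHit_eq_zero hyC]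
    · simp [firstEntrance_eq_empty (D := B ∪ C) (not_or.mpr ⟨hyB, hyC⟩)]
  have hexc : MeasurableSet exc :=
    measurableSet_lt (measurable_hitTime_walk hX x B) (measurable_hitTime_walk hX x C)
  calc _ ≤ ∑' q : ℕ × (ℤ × ℤ), P (firstEntrance X (B ∪ C) x q.1 q.2 ∩ exc) * H :=
        ENNReal.tsum_le_tsum hterm
    _ ≤ P exc * H := by
        rw [ENNReal.tsum_mul_right]
        gcongr
        refine (tsum_meas_le_meas_iUnion_of_disjoint P (fun q => ?_)
          fun q q' hqq' => ((pairwise_disjoint_firstEntrance hqq').mono Set.inter_subset_left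
            Set.inter_subset_left)).trans (measure_mono (Set.iUnion_subset fun _ =>
              Set.inter_subset_right))
        exact (sigmaOfSteps_le hX _ _ (measurableSet_firstEntrance q.1 q.2)).inter hexc

theorem truncExpHit_le_expHit_add_mul [IsProbabilityMeasure P] {μ : Measure (ℤ × ℤ)}
    {B : Set (ℤ × ℤ)} (hX : ∀ j, Measurable (X j)) (hind : iIndepFun X P)
    (hlaw : ∀ j, P.map (X j) = μ) (hBC : Disjoint B C) (x : ℤ × ℤ) (n : ℕ)
    {H : ℝ≥0∞} (hH : ∀ b ∈ B, truncExpHit P X C n b ≤ H) :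
    truncExpHit P X C n x ≤ expHit P X (B ∪ C) x + excPsi P X B C x * H :=
  (truncExpHit_le_expHit_add_tsum hX hind hlaw C (B ∪ C) x n).trans
    (add_le_add_right (tsum_firstEntrance_mul_truncExpHit_le hX hBC n hH) _)

theorem iSup_truncExpHit_le [IsProbabilityMeasure P] {μ : Measure (ℤ × ℤ)}
    {B : Set (ℤ × ℤ)} (hX : ∀ j, Measurable (X j)) (hind : iIndepFun X P)
    (hlaw : ∀ j, P.map (X j) = μ) (hBC : Disjoint B C) (S : Set (ℤ × ℤ)) (n : ℕ) :
    ⨆ a : S, truncExpHit P X C n a ≤ (⨆ a : S, expHit P X (B ∪ C) a) +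
      (⨆ a : S, excPsi P X B C a) * ⨆ b : B, truncExpHit P X C n b := by
  refine iSup_le fun a => (truncExpHit_le_expHit_add_mul hX hind hlaw hBC a n
    fun b hb => le_iSup (fun b : B => truncExpHit P X C n b) ⟨b, hb⟩).trans ?_
  gcongr
  · exact le_iSup (fun a : S => expHit P X (B ∪ C) a) a
  · exact le_iSup (fun a : S => excPsi P X B C a) a

lemma truncExpHit_le [IsProbabilityMeasure P] (n : ℕ) (y : ℤ × ℤ) :
    truncExpHit P X C n y ≤ n :=
  (lintegral_mono fun _ => min_le_right _ _).trans_eq (by simp)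

lemma iSup_truncExpHit (hX : ∀ j, Measurable (X j)) (C : Set (ℤ × ℤ)) (x : ℤ × ℤ) :
    ⨆ n : ℕ, truncExpHit P X C n x = expHit P X C x := by
  unfold truncExpHit expHit
  rw [← lintegral_iSup (fun n => (measurable_hitTime_walk hX x C).min measurable_const)
    fun n m hnm ω => min_le_min_left _ (Nat.cast_le.mpr hnm)]
  congr 1
  funext ω
  rw [← inf_iSup_eq, ENNReal.iSup_natCast, inf_top_eq]

end StrongMarkov

theorem excursion_hitting_time_bound_general {Ω : Type*} [MeasurableSpace Ω] (P : Measure Ω)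
    [IsProbabilityMeasure P] (X : ℕ → Ω → ℤ × ℤ) (hX : ∀ j, Measurable (X j))
    (μ : Measure (ℤ × ℤ))
    (hind : iIndepFun X P)
    (hlaw : ∀ j, Measure.map (X j) P = μ)
    (A B C : Set (ℤ × ℤ))
    (hAC : Disjoint A C) (hBC : Disjoint B C)
    (hψσ : (⨆ a : A, excPsi P X B C (a : ℤ × ℤ)) *
        (⨆ b : B, excPsi P X A C (b : ℤ × ℤ)) < 1)
    (a : ℤ × ℤ) :
    expHit P X (B ∪ C) a ≤ expHit P X C a ∧
    expHit P X C a ≤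
      expHit P X (B ∪ C) a +
        excPsi P X B C a *
          ((⨆ b : B, expHit P X (A ∪ C) (b : ℤ × ℤ)) +
            (⨆ b : B, excPsi P X A C (b : ℤ × ℤ)) *
              (⨆ a' : A, expHit P X (B ∪ C) (a' : ℤ × ℤ))) /
          (1 - (⨆ a' : A, excPsi P X B C (a' : ℤ × ℤ)) *
            (⨆ b : B, excPsi P X A C (b : ℤ × ℤ))) := by
  refine ⟨lintegral_mono fun _ => hitTime_anti Set.subset_union_right, ?_⟩
  set ψ := ⨆ a' : A, excPsi P X B C (a' : ℤ × ℤ)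
  set σ := ⨆ b : B, excPsi P X A C (b : ℤ × ℤ)
  set fA := ⨆ a' : A, expHit P X (B ∪ C) (a' : ℤ × ℤ)
  set fB := ⨆ b : B, expHit P X (A ∪ C) (b : ℤ × ℤ)
  set GB := fun n : ℕ => ⨆ b : B, truncExpHit P X C n b
  have hGB : ∀ n, GB n ≤ (fB + σ * fA) / (1 - ψ * σ) := fun n =>
    ENNReal.le_div_one_sub_of_le_add_mul
      (ne_top_of_le_ne_top (ENNReal.natCast_ne_top n) (iSup_le fun _ => truncExpHit_le n _)) hψσ <|
    calc GB n ≤ fB + σ * (fA + ψ * GB n) := (iSup_truncExpHit_le hX hind hlaw hAC B n).trans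
            (by gcongr; exact iSup_truncExpHit_le hX hind hlaw hBC A n)
      _ = fB + σ * fA + ψ * σ * GB n := by ring
  rw [← iSup_truncExpHit hX, mul_div_assoc]
  exact iSup_le fun n => (truncExpHit_le_expHit_add_mul hX hind hlaw hBC a n
    fun b hb => le_iSup (fun b : B => truncExpHit P X C n b) ⟨b, hb⟩).trans (by gcongr; exact hGB n)

/-- Excursion hitting-time bound: for a recurrent walk and a partition `A ⊔ B ⊔ C` of `ℤ²`
into nonempty sets, with `f_A = sup_{a∈A} E^a(T_{B∪C})`, `f_B = sup_{b∈B} E^b(T_{A∪C})`,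
`ψ = sup_{a∈A} P^a(T_B < T_C)`, `σ = sup_{b∈B} P^b(T_A < T_C)`, assuming `f_A, f_B < ∞` and
`ψσ < 1`: for every `a ∈ A`,
`E^a(T_{B∪C}) ≤ E^a(T_C) ≤ E^a(T_{B∪C}) + ψ_a (f_B + σ f_A)/(1 − ψσ)`. -/
theorem excursion_hitting_time_bound {Ω : Type*} [MeasurableSpace Ω] (P : Measure Ω)
    [IsProbabilityMeasure P] (X : ℕ → Ω → ℤ × ℤ) (hX : ∀ j, Measurable (X j))
    (μ : Measure (ℤ × ℤ)) [IsProbabilityMeasure μ]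
    (hind : iIndepFun X P)
    (hlaw : ∀ j, Measure.map (X j) P = μ)
    (hrec : ∀ x y : ℤ × ℤ, ∀ᵐ ω ∂P, ∃ t : ℕ, walk X x t ω = y)
    (A B C : Set (ℤ × ℤ)) (hA : A.Nonempty) (hB : B.Nonempty) (hC : C.Nonempty)
    (hcover : A ∪ B ∪ C = Set.univ)
    (hAB : Disjoint A B) (hAC : Disjoint A C) (hBC : Disjoint B C)
    (hfA : (⨆ a : A, expHit P X (B ∪ C) (a : ℤ × ℤ)) < ⊤)
    (hfB : (⨆ b : B, expHit P X (A ∪ C) (b : ℤ × ℤ)) < ⊤)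
    (hψσ : (⨆ a : A, excPsi P X B C (a : ℤ × ℤ)) *
        (⨆ b : B, excPsi P X A C (b : ℤ × ℤ)) < 1)
    (a : ℤ × ℤ) (ha : a ∈ A) :
    expHit P X (B ∪ C) a ≤ expHit P X C a ∧
    expHit P X C a ≤
      expHit P X (B ∪ C) a +
        excPsi P X B C a *
          ((⨆ b : B, expHit P X (A ∪ C) (b : ℤ × ℤ)) +
            (⨆ b : B, excPsi P X A C (b : ℤ × ℤ)) *
              (⨆ a' : A, expHit P X (B ∪ C) (a' : ℤ × ℤ))) /
          (1 - (⨆ a' : A, excPsi P X B C (a' : ℤ × ℤ)) *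
            (⨆ b : B, excPsi P X A C (b : ℤ × ℤ))) :=
  excursion_hitting_time_bound_general P X hX μ hind hlaw A B C hAC hBC hψσ a

end
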